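/- Let n_11 = 10, n_22 = 9, n_12 = 2, n_21 = 15, and consider arbitrary feedback parameters m_11 ≤ max(n_11, n_12) = 10 and m_22 ≤ max(n_22, n_21) = 15. Then the capacity region described by the five families of inequalities of Theorem 1 (with (x)^+ = max(x,0)) is the same set of rate pairs for (m_11, m_22) = (0,0) as for (m_11, m_22) = (10, 15); concretely, for every nonnegative real pair (R_1, R_2), the conjunction of the Theorem-1 inequalities holds with feedback parameters (0,0) if and only if it holds with (10,15). -/
import Mathlib


/-- positive part over the integers -/
def pos (x : ℤ) : ℤ := max x 0

/-- The capacity region of the two-user LD-IC-NOF (Theorem 1):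
the set of nonnegative rate pairs satisfying all the outer bounds. -/
def inRegion (n11 n22 n12 n21 m11 m22 : ℕ) (R1 R2 : ℝ) : Prop :=
  0 ≤ R1 ∧ 0 ≤ R2 ∧
  R1 ≤ ((min (max (n11 : ℤ) n21) (max (n11 : ℤ) n12) : ℤ) : ℝ) ∧
  R2 ≤ ((min (max (n22 : ℤ) n12) (max (n22 : ℤ) n21) : ℤ) : ℝ) ∧
  R1 ≤ ((min (max (n11 : ℤ) n21)
          (max (n11 : ℤ) (pos ((m22 : ℤ) - pos ((n22 : ℤ) - n21)))) : ℤ) : ℝ) ∧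
  R2 ≤ ((min (max (n22 : ℤ) n12)
          (max (n22 : ℤ) (pos ((m11 : ℤ) - pos ((n11 : ℤ) - n12)))) : ℤ) : ℝ) ∧
  R1 + R2 ≤ ((min (max (n22 : ℤ) n12 + pos ((n11 : ℤ) - n12))
                  (max (n11 : ℤ) n21 + pos ((n22 : ℤ) - n21)) : ℤ) : ℝ) ∧
  R1 + R2 ≤ ((max (max (pos ((n11 : ℤ) - n12)) (n21 : ℤ))
                  ((n11 : ℤ) - pos (max (n11 : ℤ) n12 - m11))
              + max (max (pos ((n22 : ℤ) - n21)) (n12 : ℤ))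
                  ((n22 : ℤ) - pos (max (n22 : ℤ) n21 - m22)) : ℤ) : ℝ) ∧
  2 * R1 + R2 ≤ ((max (n11 : ℤ) n21 + pos ((n11 : ℤ) - n12)
              + max (max (pos ((n22 : ℤ) - n21)) (n12 : ℤ))
                  ((n22 : ℤ) - pos (max (n22 : ℤ) n21 - m22)) : ℤ) : ℝ) ∧
  2 * R2 + R1 ≤ ((max (n22 : ℤ) n12 + pos ((n22 : ℤ) - n21)
              + max (max (pos ((n11 : ℤ) - n12)) (n21 : ℤ))
                  ((n11 : ℤ) - pos (max (n11 : ℤ) n12 - m11)) : ℤ) : ℝ)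

/-- Example 5: for (n11,n22,n12,n21) = (10,9,2,15), feedback has no effect:
the Theorem-1 region with (m11,m22) = (0,0) coincides with the one with
perfect feedback (m11,m22) = (10,15). -/
theorem example5_feedback_useless (R1 R2 : ℝ) :
    inRegion 10 9 2 15 0 0 R1 R2 ↔ inRegion 10 9 2 15 10 15 R1 R2 := by
  simp only [inRegion, pos]
  norm_num
  intro h1 h2 h3 h4
  constructor <;> rintro ⟨a,b,c,d,e,f⟩ <;> refine ⟨?_,?_,?_,?_,?_,?_⟩ <;> linarith
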